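/- arXiv:1404.7338 — 3 statements merged into one kernel-verified Lean document; each statement's English description precedes it below -/
import Mathlib

section
/- Let u : ℝ → ℝ be a smooth 1-periodic solution of −(1/2)u'' + λ − e^u = 0 with λ ∈ ℝ. Then ∫₀¹ ((1/4)|u''|² + (1/48)|u'|⁴ − (λ/2)|u'|²) e^{−u/2} dx = 0. -/
open Real

theorem ode_identity_1d (u : ℝ → ℝ) (lam : ℝ) (hu : ContDiff ℝ (⊤ : ℕ∞) u)
    (hper : Function.Periodic u 1)
    (hode : ∀ x, -(1/2) * deriv (deriv u) x + lam = Real.exp (u x)) :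
    ∫ x in (0:ℝ)..1,
        ((1/4) * (deriv (deriv u) x)^2 + (1/48) * (deriv u x)^4
          - (lam/2) * (deriv u x)^2) * Real.exp (-(u x)/2) = 0 := by
  have huI : ContDiff ℝ (⊤ : ℕ∞) u := hu.of_le (by simp)
  have hdu : Differentiable ℝ u := huI.differentiable (by simp)
  have hu' : ContDiff ℝ (⊤ : ℕ∞) (deriv u) := (contDiff_infty_iff_deriv.mp huI).2
  have hdu' : Differentiable ℝ (deriv u) := hu'.differentiable (by simp)
  have hu'' : ContDiff ℝ (⊤ : ℕ∞) (deriv (deriv u)) := (contDiff_infty_iff_deriv.mp hu').2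
  have hode' : deriv (deriv u) = fun x => 2*lam - 2*Real.exp (u x) := by
    funext x; have := hode x; linarith
  set F : ℝ → ℝ := fun x =>
    ((1/4) * deriv (deriv u) x * deriv u x - (1/24) * (deriv u x)^3)
      * Real.exp (-(u x)/2) with hF
  have key : ∀ x, HasDerivAt F
      (((1/4) * (deriv (deriv u) x)^2 + (1/48) * (deriv u x)^4
        - (lam/2) * (deriv u x)^2) * Real.exp (-(u x)/2)) x := by
    intro x
    have h1 : HasDerivAt u (deriv u x) x := (hdu x).hasDerivAt
    have h2 : HasDerivAt (deriv u) (deriv (deriv u) x) x := (hdu' x).hasDerivAt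
    have h3 : HasDerivAt (deriv (deriv u)) (-2 * deriv u x * Real.exp (u x)) x := by
      rw [hode']
      have h3a : HasDerivAt (fun y => 2*lam - 2*Real.exp (u y))
          (0 - 2 * (Real.exp (u x) * deriv u x)) x :=
        (hasDerivAt_const x (2*lam)).sub ((h1.exp).const_mul 2)
      convert h3a using 1; ring
    have hE : HasDerivAt (fun y => Real.exp (-(u y)/2))
        (Real.exp (-(u x)/2) * (-(deriv u x)/2)) x := by
      have h4 : HasDerivAt (fun y => -(u y)/2) (-(deriv u x)/2) x := (h1.neg).div_const 2
      exact h4.exp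
    have hG : HasDerivAt (fun y =>
        (1/4) * deriv (deriv u) y * deriv u y - (1/24) * (deriv u y)^3)
        (((1/4) * (-2 * deriv u x * Real.exp (u x))) * deriv u x
          + ((1/4) * deriv (deriv u) x) * deriv (deriv u) x
          - (1/24) * ((3:ℕ) * (deriv u x)^2 * deriv (deriv u) x)) x := by
      exact ((h3.const_mul (1/4)).mul h2).sub ((h2.pow 3).const_mul (1/24))
    have := hG.mul hE
    refine this.congr_deriv ?_
    have he : Real.exp (u x) = -(1/2) * deriv (deriv u) x + lam := (hode x).symm
    push_cast
    rw [he]; ring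
  have hcont : Continuous (fun x =>
      ((1/4) * (deriv (deriv u) x)^2 + (1/48) * (deriv u x)^4
        - (lam/2) * (deriv u x)^2) * Real.exp (-(u x)/2)) := by
    have c1 := hu.continuous
    have c2 := hu'.continuous
    have c3 := hu''.continuous
    fun_prop
  rw [intervalIntegral.integral_eq_sub_of_hasDerivAt (fun x _ => key x)
    (hcont.intervalIntegrable 0 1)]
  have hpd : ∀ f : ℝ → ℝ, Function.Periodic f 1 → Function.Periodic (deriv f) 1 := by
    intro f hf x
    have hfe : (fun y => f (y + 1)) = f := funext hf
    rw [← deriv_comp_add_const (f := f) (a := 1) (x := x), hfe]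
  have hpu : u 1 = u 0 := by simpa using hper 0
  have hp1 : deriv u 1 = deriv u 0 := by simpa using hpd u hper 0
  have hp2 : deriv (deriv u) 1 = deriv (deriv u) 0 := by
    simpa using hpd (deriv u) (hpd u hper) 0
  simp only [hF, hpu, hp1, hp2, sub_self]
end

section
/- Let u : ℝ → ℝ be a smooth 1-periodic function. Then ∫₀¹ (|u''|² − (1/48)|u'|⁴) e^{−u/2} dx ≥ 4π² ∫₀¹ |u'|² e^{−u/2} dx. -/
open Real

open MeasureTheory Complex intervalIntegral AddCircle
open scoped ENNReal

lemma fourier_parseval (f : ℝ → ℂ) (hfc : Continuous f) (hpf : Function.Periodic f 1) :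
    Summable (fun n : ℤ => ‖∫ x in (0:ℝ)..1, (fourier (-n)) (x : AddCircle (1:ℝ)) * f x‖^2) ∧
    ∑' n : ℤ, ‖∫ x in (0:ℝ)..1, (fourier (-n)) (x : AddCircle (1:ℝ)) * f x‖^2
      = ∫ x in (0:ℝ)..1, ‖f x‖^2 := by
  haveI : Fact ((0:ℝ) < 1) := ⟨one_pos⟩
  set F : C(AddCircle (1:ℝ), ℂ) := ⟨hpf.lift, continuous_coinduced_dom.mpr hfc⟩ with hFdef
  have hcoeff : ∀ n : ℤ, fourierCoeff (⇑F) n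
      = ∫ x in (0:ℝ)..1, (fourier (-n)) (x : AddCircle (1:ℝ)) * f x := by
    intro n
    rw [fourierCoeff_eq_intervalIntegral (⇑F) n 0]
    simp only [zero_add, one_div, smul_eq_mul]
    rw [inv_one, one_smul]
    apply intervalIntegral.integral_congr
    intro x _
    simp [hFdef, Function.Periodic.lift_coe]
  have hhaar : (haarAddCircle : Measure (AddCircle (1:ℝ))) = volume := by
    rw [volume_eq_smul_haarAddCircle]
    simp
  set fL := ContinuousMap.toLp (E := ℂ) 2 haarAddCircle ℂ F with hfL
  have hcoeff2 : ∀ n : ℤ, fourierCoeff (fL : AddCircle (1:ℝ) → ℂ) n = fourierCoeff (⇑F) n :=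
    fourierCoeff_toLp F
  have hpars := tsum_sq_fourierCoeff fL
  have hint : ∫ t : AddCircle (1:ℝ), ‖fL t‖^2 ∂haarAddCircle = ∫ x in (0:ℝ)..1, ‖f x‖^2 := by
    have h1 : ∫ t : AddCircle (1:ℝ), ‖fL t‖^2 ∂haarAddCircle
        = ∫ t : AddCircle (1:ℝ), ‖F t‖^2 ∂haarAddCircle := by
      apply MeasureTheory.integral_congr_ae
      filter_upwards [ContinuousMap.coeFn_toLp (p := 2) (𝕜 := ℂ) haarAddCircle F] with t ht
      rw [ht]
    rw [h1, hhaar, ← AddCircle.intervalIntegral_preimage 1 0 (fun t => ‖F t‖^2)]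
    rw [zero_add]
    apply intervalIntegral.integral_congr
    intro x _
    simp [hFdef, Function.Periodic.lift_coe]
  have hsum : Summable (fun n : ℤ => ‖fourierCoeff (fL : AddCircle (1:ℝ) → ℂ) n‖^2) := by
    have hm : Memℓp (⇑(fourierBasis.repr fL)) 2 := lp.memℓp _
    have h2 := hm.summable (by norm_num : 0 < (2:ℝ≥0∞).toReal)
    have h3 : ∀ n : ℤ, ‖(fourierBasis.repr fL) n‖ ^ ((2:ℝ≥0∞).toReal)
        = ‖fourierCoeff (fL : AddCircle (1:ℝ) → ℂ) n‖^2 := by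
      intro n
      rw [fourierBasis_repr]
      norm_num
    exact (summable_congr h3).mp h2
  constructor
  · refine (summable_congr ?_).mp hsum
    intro n
    rw [hcoeff2, hcoeff]
  · rw [← hint, ← hpars]
    apply tsum_congr
    intro n
    rw [hcoeff2 n, hcoeff n]

theorem wirtinger_aux (g : ℝ → ℝ) (hg : ContDiff ℝ (⊤:ℕ∞) g) (hper : Function.Periodic g 1)
    (hmean : ∫ x in (0:ℝ)..1, g x = 0) :
    4 * π ^ 2 * ∫ x in (0:ℝ)..1, (g x) ^ 2 ≤ ∫ x in (0:ℝ)..1, (deriv g x) ^ 2 := by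
  haveI : Fact ((0:ℝ) < 1) := ⟨one_pos⟩
  have hgc : Continuous g := hg.continuous
  have hgd : Differentiable ℝ g := hg.differentiable (by simp)
  have hg'c : Continuous (deriv g) := (contDiff_infty_iff_deriv.mp hg).2.continuous
  have hper' : Function.Periodic (deriv g) 1 := by
    intro x
    have h1 : (fun y => g (y + 1)) = g := funext hper
    rw [← deriv_comp_add_const g 1 x, h1]
  set f : ℝ → ℂ := fun x => ((g x : ℝ) : ℂ) with hf
  set f' : ℝ → ℂ := fun x => ((deriv g x : ℝ) : ℂ) with hf'
  have hpf : Function.Periodic f 1 := fun x => by simp [hf, hper x]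
  have hpf' : Function.Periodic f' 1 := fun x => by simp [hf', hper' x]
  have hfc : Continuous f := Complex.continuous_ofReal.comp hgc
  have hf'c : Continuous f' := Complex.continuous_ofReal.comp hg'c
  have hfd : ∀ x : ℝ, HasDerivAt f (f' x) x := fun x => ((hgd x).hasDerivAt).ofReal_comp
  set C : ℤ → ℂ := fun n => ∫ x in (0:ℝ)..1, (fourier (-n) (x : AddCircle (1:ℝ))) * f x with hC
  set D : ℤ → ℂ := fun n => ∫ x in (0:ℝ)..1, (fourier (-n) (x : AddCircle (1:ℝ))) * f' x with hD
  have key : ∀ n : ℤ, D n = 2 * π * I * n * C n := by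
    intro n
    have hu : ∀ x ∈ Set.uIcc (0:ℝ) 1, HasDerivAt (fun y : ℝ => fourier (-n) (y : AddCircle (1:ℝ)))
        (-2 * π * I * n / 1 * fourier (-n) (x : AddCircle (1:ℝ))) x :=
      fun x _ => hasDerivAt_fourier_neg 1 n x
    have hv : ∀ x ∈ Set.uIcc (0:ℝ) 1, HasDerivAt f (f' x) x := fun x _ => hfd x
    have hfour : Continuous fun x : ℝ => fourier (-n) (x : AddCircle (1:ℝ)) :=
      (map_continuous (fourier (-n))).comp (AddCircle.continuous_mk' 1)
    have hiu : IntervalIntegrable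
        (fun x : ℝ => -2 * π * I * n / 1 * fourier (-n) (x : AddCircle (1:ℝ)))
        volume 0 1 := ((continuous_const.mul hfour)).intervalIntegrable _ _
    have hiv : IntervalIntegrable f' volume 0 1 := hf'c.intervalIntegrable _ _
    have hibp := integral_mul_deriv_eq_deriv_mul hu hv hiu hiv
    have hbd : (fourier (-n) ((1:ℝ) : AddCircle (1:ℝ))) * f 1
        = (fourier (-n) ((0:ℝ) : AddCircle (1:ℝ))) * f 0 := by
      have h1 : ((1:ℝ) : AddCircle (1:ℝ)) = ((0:ℝ) : AddCircle (1:ℝ)) := by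
        simpa using AddCircle.coe_add_period 1 0
      have h2 : f 1 = f 0 := by simpa using hpf 0
      rw [h1, h2]
    rw [hbd, sub_self, zero_sub] at hibp
    have h3 : (∫ x in (0:ℝ)..1, -2 * ↑π * I * ↑n / 1 * (fourier (-n)) (x : AddCircle (1:ℝ)) * f x)
        = (-2 * ↑π * I * ↑n) * C n := by
      simp only [hC]
      rw [← intervalIntegral.integral_const_mul]
      apply intervalIntegral.integral_congr
      intro x _
      ring
    simp only [hD]
    rw [hibp, h3]
    ring
  have hC0 : C 0 = 0 := by
    simp only [hC]
    have : (∫ x in (0:ℝ)..1, (fourier (-(0:ℤ)) (x : AddCircle (1:ℝ))) * f x)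
        = ∫ x in (0:ℝ)..1, f x := by
      apply intervalIntegral.integral_congr
      intro x _
      simp
    rw [this, hf, intervalIntegral.integral_ofReal, hmean]
    simp
  have hPf := fourier_parseval f hfc hpf
  have hPf' := fourier_parseval f' hf'c hpf'
  have hterm : ∀ n : ℤ, 4 * π ^ 2 * ‖C n‖^2 ≤ ‖D n‖^2 := by
    intro n
    rcases eq_or_ne n 0 with rfl | hn
    · rw [hC0]
      simp
    · rw [key n]
      have h1 : ‖2 * ↑π * I * ↑n * C n‖ = 2 * π * |(n:ℝ)| * ‖C n‖ := by
        simp [norm_mul, Complex.norm_I, Complex.norm_real, Real.norm_eq_abs,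
          _root_.abs_of_nonneg Real.pi_pos.le]
      rw [h1]
      have h2 : (1:ℝ) ≤ |(n:ℝ)| := by
        rw [← Int.cast_abs]
        exact_mod_cast Int.one_le_abs (by simpa using hn)
      have h4 : (1:ℝ) ≤ |(n:ℝ)|^2 := by nlinarith
      calc 4 * π ^ 2 * ‖C n‖^2 = (4 * π ^ 2 * ‖C n‖^2) * 1 := by ring
        _ ≤ (4 * π ^ 2 * ‖C n‖^2) * |(n:ℝ)|^2 :=
            mul_le_mul_of_nonneg_left h4 (by positivity)
        _ = (2 * π * |(n:ℝ)| * ‖C n‖)^2 := by ring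
  -- summability of the lower family
  have hsumD : Summable (fun n : ℤ => ‖D n‖^2) := hPf'.1
  have hsumC4 : Summable (fun n : ℤ => 4 * π ^ 2 * ‖C n‖^2) := by
    apply Summable.of_nonneg_of_le (fun n => by positivity) hterm hsumD
  have hts : ∑' n : ℤ, 4 * π ^ 2 * ‖C n‖^2 ≤ ∑' n : ℤ, ‖D n‖^2 :=
    Summable.tsum_le_tsum hterm hsumC4 hsumD
  rw [tsum_mul_left] at hts
  rw [hPf.2, hPf'.2] at hts
  have e1 : ∫ x in (0:ℝ)..1, ‖f x‖^2 = ∫ x in (0:ℝ)..1, (g x)^2 := by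
    apply intervalIntegral.integral_congr
    intro x _
    simp [hf, Complex.norm_real, Real.norm_eq_abs, _root_.sq_abs]
  have e2 : ∫ x in (0:ℝ)..1, ‖f' x‖^2 = ∫ x in (0:ℝ)..1, (deriv g x)^2 := by
    apply intervalIntegral.integral_congr
    intro x _
    simp [hf', Complex.norm_real, Real.norm_eq_abs, _root_.sq_abs]
  rw [e1, e2] at hts
  exact hts

lemma periodic_deriv' (f : ℝ → ℝ) (h : Function.Periodic f 1) :
    Function.Periodic (deriv f) 1 := by
  intro x
  have h1 : (fun y => f (y + 1)) = f := funext h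
  rw [← deriv_comp_add_const f 1 x, h1]

theorem poincare_weighted_1d (u : ℝ → ℝ) (hu : ContDiff ℝ (⊤ : ℕ∞) u)
    (hper : Function.Periodic u 1) :
    4 * π^2 * ∫ x in (0:ℝ)..1, (deriv u x)^2 * Real.exp (-(u x)/2)
      ≤ ∫ x in (0:ℝ)..1,
          ((deriv (deriv u) x)^2 - (1/48) * (deriv u x)^4) * Real.exp (-(u x)/2) := by
  have hu1 : ContDiff ℝ (⊤:ℕ∞) u := hu.of_le (by simp)
  have hud : Differentiable ℝ u := hu1.differentiable (by simp)
  have hu' : ContDiff ℝ (⊤:ℕ∞) (deriv u) := (contDiff_infty_iff_deriv.mp hu1).2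
  have hu'd : Differentiable ℝ (deriv u) := hu'.differentiable (by simp)
  have hu'c : Continuous (deriv u) := hu'.continuous
  have hu''c : Continuous (deriv (deriv u)) := (contDiff_infty_iff_deriv.mp hu').2.continuous
  have hperu' : Function.Periodic (deriv u) 1 := periodic_deriv' u hper
  have huc : Continuous u := hu1.continuous
  -- the test function g = deriv (exp (-u/4))
  set g : ℝ → ℝ := fun x => -(deriv u x)/4 * Real.exp (-(u x)/4) with hgdef
  have hgsmooth : ContDiff ℝ (⊤:ℕ∞) g :=
    (hu'.neg.div_const 4).mul ((hu1.neg.div_const 4).exp)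
  have hperg : Function.Periodic g 1 := fun x => by
    simp [hgdef, hper x, hperu' x]
  have hvd : ∀ x : ℝ, HasDerivAt (fun y => Real.exp (-(u y)/4)) (g x) x := by
    intro x
    have h : HasDerivAt (fun y => -(u y)/4) (-(deriv u x)/4) x :=
      ((hud x).hasDerivAt.neg.div_const 4)
    have := h.exp
    convert this using 1
    simp [hgdef]
    ring
  have hmean : ∫ x in (0:ℝ)..1, g x = 0 := by
    have hgc : Continuous g := hgsmooth.continuous
    have := intervalIntegral.integral_eq_sub_of_hasDerivAt
      (f := fun y => Real.exp (-(u y)/4)) (f' := g)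
      (fun x _ => hvd x) (hgc.intervalIntegrable 0 1)
    rw [this]
    have h1 : u 1 = u 0 := by simpa using hper 0
    simp [h1]
  -- derivative of g
  have hgd : ∀ x : ℝ, HasDerivAt g
      (((deriv u x)^2/16 - deriv (deriv u) x/4) * Real.exp (-(u x)/4)) x := by
    intro x
    have h1 : HasDerivAt (fun y => -(deriv u y)/4) (-(deriv (deriv u) x)/4) x :=
      ((hu'd x).hasDerivAt.neg.div_const 4)
    have h2 : HasDerivAt (fun y => Real.exp (-(u y)/4))
        (Real.exp (-(u x)/4) * (-(deriv u x)/4)) x :=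
      ((hud x).hasDerivAt.neg.div_const 4).exp
    have := h1.fun_mul h2
    refine this.congr_deriv ?_
    ring
  have hE : ∀ t : ℝ, Real.exp (-t/4) * Real.exp (-t/4) = Real.exp (-t/2) := by
    intro t
    rw [← Real.exp_add]
    ring_nf
  -- the correction function φ
  set φ : ℝ → ℝ := fun x => (deriv u x)^3 * Real.exp (-(u x)/2) with hφdef
  set φ' : ℝ → ℝ := fun x =>
    (3*(deriv u x)^2*(deriv (deriv u) x) - (1/2)*(deriv u x)^4) * Real.exp (-(u x)/2) with hφ'def
  have hφd : ∀ x : ℝ, HasDerivAt φ (φ' x) x := by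
    intro x
    have h1 : HasDerivAt (fun y => (deriv u y)^3)
        (3 * (deriv u x)^2 * deriv (deriv u) x) x := by
      simpa using ((hu'd x).hasDerivAt).fun_pow 3
    have h2 : HasDerivAt (fun y => Real.exp (-(u y)/2))
        (Real.exp (-(u x)/2) * (-(deriv u x)/2)) x :=
      ((hud x).hasDerivAt.neg.div_const 2).exp
    have := h1.fun_mul h2
    refine this.congr_deriv ?_
    simp only [hφ'def]
    ring
  have hφ'c : Continuous φ' := by
    apply Continuous.mul
    · exact ((continuous_const.mul (hu'c.pow 2)).mul hu''c).sub
        (continuous_const.mul (hu'c.pow 4))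
    · exact Real.continuous_exp.comp ((huc.neg).div_const 2)
  have hφint : ∫ x in (0:ℝ)..1, φ' x = 0 := by
    rw [intervalIntegral.integral_eq_sub_of_hasDerivAt (fun x _ => hφd x)
      (hφ'c.intervalIntegrable 0 1)]
    have h1 : u 1 = u 0 := by simpa using hper 0
    have h2 : deriv u 1 = deriv u 0 := by simpa using hperu' 0
    simp [hφdef, h1, h2]
  -- Wirtinger applied to g
  have W := wirtinger_aux g hgsmooth hperg hmean
  -- identify the two integrals
  have hexpc : Continuous fun x => Real.exp (-(u x)/2) :=
    Real.continuous_exp.comp ((huc.neg).div_const 2)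
  have E1 : ∫ x in (0:ℝ)..1, (g x)^2
      = (1/16) * ∫ x in (0:ℝ)..1, (deriv u x)^2 * Real.exp (-(u x)/2) := by
    rw [← intervalIntegral.integral_const_mul]
    apply intervalIntegral.integral_congr
    intro x _
    simp only [hgdef]
    have h := hE (u x)
    calc (-(deriv u x)/4 * Real.exp (-(u x)/4))^2
        = (deriv u x)^2/16 * (Real.exp (-(u x)/4) * Real.exp (-(u x)/4)) := by ring
      _ = 1/16 * ((deriv u x)^2 * Real.exp (-(u x)/2)) := by rw [h]; ring
  have E2 : ∫ x in (0:ℝ)..1, (deriv g x)^2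
      = (1/16) * ∫ x in (0:ℝ)..1,
          ((deriv (deriv u) x)^2 - (1/48) * (deriv u x)^4) * Real.exp (-(u x)/2) := by
    have hpt : ∀ x : ℝ, (deriv g x)^2
        = (1/16) * (((deriv (deriv u) x)^2 - (1/48) * (deriv u x)^4) * Real.exp (-(u x)/2))
          - (1/96) * φ' x := by
      intro x
      rw [(hgd x).deriv]
      have h := hE (u x)
      simp only [hφ'def]
      calc (((deriv u x)^2/16 - deriv (deriv u) x/4) * Real.exp (-(u x)/4))^2
          = ((deriv u x)^2/16 - deriv (deriv u) x/4)^2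
            * (Real.exp (-(u x)/4) * Real.exp (-(u x)/4)) := by ring
        _ = ((deriv u x)^2/16 - deriv (deriv u) x/4)^2 * Real.exp (-(u x)/2) := by rw [h]
        _ = _ := by ring
    have hi1 : IntervalIntegrable (fun x =>
        (1/16) * (((deriv (deriv u) x)^2 - (1/48) * (deriv u x)^4) * Real.exp (-(u x)/2)))
        volume 0 1 := by
      apply Continuous.intervalIntegrable
      exact continuous_const.mul ((((hu''c.pow 2)).sub
        (continuous_const.mul (hu'c.pow 4))).mul hexpc)
    have hi2 : IntervalIntegrable (fun x => (1/96) * φ' x) volume 0 1 :=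
      (continuous_const.mul hφ'c).intervalIntegrable 0 1
    rw [intervalIntegral.integral_congr (g := fun x =>
        (1/16) * (((deriv (deriv u) x)^2 - (1/48) * (deriv u x)^4) * Real.exp (-(u x)/2))
          - (1/96) * φ' x) (fun x _ => hpt x)]
    rw [intervalIntegral.integral_sub hi1 hi2]
    rw [intervalIntegral.integral_const_mul, intervalIntegral.integral_const_mul, hφint]
    ring
  rw [E1, E2] at W
  linarith [W]
end

section
/- Any smooth 1-periodic solution u of the ODE −(1/2)u'' + λ = e^u on ℝ/ℤ with 0 < λ < 2π² is constant. -/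
open Real MeasureTheory intervalIntegral Complex AddCircle
open scoped ENNReal

instance fact_zero_lt_one_real : Fact ((0:ℝ) < 1) := ⟨one_pos⟩


private lemma periodic_lift_continuous {f : ℝ → ℂ} (hp : Function.Periodic f 1)
    (hc : Continuous f) : Continuous hp.lift := by
  have he : AddCircle.liftIco 1 0 f = hp.lift := by
    funext z
    obtain ⟨b, hb, rfl⟩ := AddCircle.eq_coe_Ico z
    rw [Function.Periodic.lift_coe, AddCircle.liftIco_coe_apply (by simpa using hb)]
  rw [← he]
  exact AddCircle.liftIco_zero_continuous (by simpa using (hp 0).symm) hc.continuousOn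

private lemma fourierCoeff_eq {F : AddCircle (1:ℝ) → ℂ} {f : ℝ → ℂ}
    (hFf : ∀ x : ℝ, F x = f x) (n : ℤ) :
    fourierCoeff F n = ∫ x in (0:ℝ)..1, fourier (-n) (x : AddCircle (1:ℝ)) * f x := by
  rw [fourierCoeff_eq_intervalIntegral F n 0]
  rw [show (1:ℝ)/1 = 1 by norm_num, one_smul, zero_add]
  exact intervalIntegral.integral_congr fun x _ => by rw [hFf, smul_eq_mul]

private lemma parseval_piece (F : C(AddCircle (1:ℝ), ℂ)) (f : ℝ → ℝ)
    (hFf : ∀ x : ℝ, F x = (f x : ℂ)) :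
    Summable (fun n : ℤ => ‖fourierCoeff (⇑F) n‖^2) ∧
    ∑' n : ℤ, ‖fourierCoeff (⇑F) n‖^2 = ∫ x in (0:ℝ)..1, f x ^ 2 := by
  set Flp := ContinuousMap.toLp (E := ℂ) 2 haarAddCircle ℂ F with hFlp
  have hcoeff : ∀ n, fourierCoeff (Flp : AddCircle (1:ℝ) → ℂ) n = fourierCoeff (⇑F) n :=
    fourierCoeff_toLp F
  have hsum : Summable (fun n : ℤ => ‖fourierCoeff (⇑F) n‖^2) := by
    have h1 := lp.memℓp (fourierBasis.repr Flp)
    rw [memℓp_gen_iff (by norm_num : 0 < (2:ℝ≥0∞).toReal)] at h1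
    have : ∀ n : ℤ, ‖fourierBasis.repr Flp n‖ ^ (2:ℝ≥0∞).toReal = ‖fourierCoeff (⇑F) n‖^2 := by
      intro n
      rw [fourierBasis_repr, hcoeff n]
      norm_num [Real.rpow_natCast]
    rwa [funext this] at h1
  refine ⟨hsum, ?_⟩
  have hpars := tsum_sq_fourierCoeff Flp
  simp_rw [hcoeff] at hpars
  rw [hpars]
  have hae : (Flp : AddCircle (1:ℝ) → ℂ) =ᵐ[haarAddCircle] ⇑F :=
    ContinuousMap.coeFn_toLp haarAddCircle F
  have h2 : (∫ t : AddCircle (1:ℝ), ‖(Flp : AddCircle (1:ℝ) → ℂ) t‖^2 ∂haarAddCircle)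
      = ∫ t : AddCircle (1:ℝ), ‖F t‖^2 ∂haarAddCircle :=
    integral_congr_ae (hae.fun_comp (fun z => ‖z‖^2))
  rw [h2]
  have hvol : (haarAddCircle : Measure (AddCircle (1:ℝ))) = volume := by
    rw [AddCircle.volume_eq_smul_haarAddCircle]; simp
  rw [hvol]
  have h3 := AddCircle.intervalIntegral_preimage (1:ℝ) 0 (fun t => ‖F t‖^2)
  rw [zero_add] at h3
  rw [← h3]
  exact intervalIntegral.integral_congr fun x _ => by rw [hFf]; simp [sq_abs]

/-- Sharp Wirtinger inequality on the unit circle. -/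
theorem wirtinger_period_one {f : ℝ → ℝ} (hfd : Differentiable ℝ f)
    (hcg : Continuous (deriv f))
    (hper : Function.Periodic f 1) (hmean : (∫ x in (0:ℝ)..1, f x) = 0) :
    4 * π ^ 2 * ∫ x in (0:ℝ)..1, f x ^ 2 ≤ ∫ x in (0:ℝ)..1, deriv f x ^ 2 := by
  have hcf : Continuous f := hfd.continuous
  have hgper : Function.Periodic (deriv f) 1 := by
    intro x
    have : (fun y : ℝ => f (y + 1)) = f := funext fun y => hper y
    calc deriv f (x + 1) = deriv (fun y : ℝ => f (y + 1)) x := (deriv_comp_add_const f 1 x).symm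
    _ = deriv f x := by rw [this]
  -- complex lifts
  have hfCper : Function.Periodic (fun x : ℝ => (f x : ℂ)) 1 := fun x => by simp [hper x]
  have hgCper : Function.Periodic (fun x : ℝ => ((deriv f x : ℝ) : ℂ)) 1 :=
    fun x => by simp [hgper x]
  set F : C(AddCircle (1:ℝ), ℂ) :=
    ⟨hfCper.lift, periodic_lift_continuous hfCper (Complex.continuous_ofReal.comp hcf)⟩ with hF
  set G : C(AddCircle (1:ℝ), ℂ) :=
    ⟨hgCper.lift, periodic_lift_continuous hgCper (Complex.continuous_ofReal.comp hcg)⟩ with hG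
  have hFf : ∀ x : ℝ, F (x : AddCircle (1:ℝ)) = (f x : ℂ) := fun x => hfCper.lift_coe x
  have hGf : ∀ x : ℝ, G (x : AddCircle (1:ℝ)) = ((deriv f x : ℝ) : ℂ) := fun x => hgCper.lift_coe x
  obtain ⟨hsumc, hparsc⟩ := parseval_piece F f hFf
  obtain ⟨hsumd, hparsd⟩ := parseval_piece G (deriv f) hGf
  set c : ℤ → ℂ := fun n => fourierCoeff (⇑F) n with hc
  set d : ℤ → ℂ := fun n => fourierCoeff (⇑G) n with hd
  -- relation d n = 2πin c n
  have hrel : ∀ n : ℤ, d n = (2 * π * I * n) * c n := by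
    intro n
    show fourierCoeff (⇑G) n = (2 * ↑π * I * (n:ℂ)) * fourierCoeff (⇑F) n
    rw [fourierCoeff_eq hFf n, fourierCoeff_eq hGf n]
    have hu : ∀ x ∈ Set.uIcc (0:ℝ) 1,
        HasDerivAt (fun y : ℝ => (fourier (-n) (y : AddCircle (1:ℝ)) : ℂ))
        ((-2 * π * I * n) * fourier (-n) (x : AddCircle (1:ℝ))) x := by
      intro x _
      simpa using hasDerivAt_fourier_neg 1 n x
    have hv : ∀ x ∈ Set.uIcc (0:ℝ) 1, HasDerivAt (fun y : ℝ => (f y : ℂ)) ((deriv f x : ℝ) : ℂ) x :=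
      fun x _ => ((hfd x).hasDerivAt).ofReal_comp
    have hcont : Continuous fun x : ℝ => (fourier (-n) (x : AddCircle (1:ℝ)) : ℂ) :=
      (map_continuous (fourier (-n))).comp (AddCircle.continuous_mk' 1)
    have h := intervalIntegral.integral_mul_deriv_eq_deriv_mul hu hv
      (((continuous_const.mul hcont).intervalIntegrable 0 1))
      ((Complex.continuous_ofReal.comp hcg).intervalIntegrable 0 1)
    rw [h]
    have hb : ((1:ℝ) : AddCircle (1:ℝ)) = ((0:ℝ) : AddCircle (1:ℝ)) := by
      simpa using AddCircle.coe_period (p := (1:ℝ))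
    have hf10 : f 1 = f 0 := by simpa using hper 0
    rw [hb, hf10]
    have : (∫ x in (0:ℝ)..1, (-2 * π * I * n * fourier (-n) (x : AddCircle (1:ℝ))) * (f x : ℂ))
        = (-2 * π * I * n) * ∫ x in (0:ℝ)..1, fourier (-n) (x : AddCircle (1:ℝ)) * (f x : ℂ) := by
      simp_rw [mul_assoc, intervalIntegral.integral_const_mul]
    rw [this]
    ring
  -- mean zero
  have hc0 : c 0 = 0 := by
    show fourierCoeff (⇑F) 0 = 0
    rw [fourierCoeff_eq hFf 0]
    simp only [neg_zero, fourier_zero, one_mul]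
    rw [intervalIntegral.integral_ofReal, hmean]
    simp
  -- termwise inequality
  have hterm : ∀ n : ℤ, 4 * π ^ 2 * ‖c n‖ ^ 2 ≤ ‖d n‖ ^ 2 := by
    intro n
    rcases eq_or_ne n 0 with rfl | hn
    · simp only [hc0, norm_zero]
      have : (0:ℝ) ≤ ‖d 0‖^2 := sq_nonneg _
      nlinarith
    · rw [hrel n]
      have hnormd : ‖(2 * (π:ℂ) * I * n) * c n‖ = (2 * π * |(n:ℝ)|) * ‖c n‖ := by
        simp [norm_mul, abs_of_pos Real.pi_pos, Complex.norm_real]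
      rw [hnormd]
      have h1 : (1:ℝ) ≤ |(n:ℝ)| := by
        rw [← Int.cast_abs]
        exact_mod_cast Int.one_le_abs hn
      have key : 0 ≤ (|(n:ℝ)|^2 - 1) * (π^2 * ‖c n‖^2) :=
        mul_nonneg (by nlinarith) (by positivity)
      nlinarith [key]
  -- sum up
  calc 4 * π ^ 2 * ∫ x in (0:ℝ)..1, f x ^ 2
      = ∑' n : ℤ, 4 * π ^ 2 * ‖c n‖ ^ 2 := by rw [tsum_mul_left, hparsc]
    _ ≤ ∑' n : ℤ, ‖d n‖ ^ 2 := Summable.tsum_le_tsum hterm (hsumc.mul_left _) hsumd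
    _ = _ := hparsd


theorem rigidity_1d (u : ℝ → ℝ) (lam : ℝ) (hu : ContDiff ℝ (⊤ : ℕ∞) u)
    (hper : Function.Periodic u 1)
    (hlam0 : 0 < lam) (hlam : lam < 2 * π^2)
    (hode : ∀ x, -(1/2) * deriv (deriv u) x + lam = Real.exp (u x)) :
    ∀ x y, u x = u y := by
  have hud : Differentiable ℝ u := hu.differentiable (by simp)
  set w := deriv u with hw
  have hwsm : ContDiff ℝ (↑(⊤:ℕ∞)) w := (contDiff_infty_iff_deriv.mp (hu.of_le (by simp))).2
  have hwd : Differentiable ℝ w := hwsm.differentiable (by simp)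
  have hcw : Continuous w := hwsm.continuous
  have hcw' : Continuous (deriv w) := ((contDiff_infty_iff_deriv.mp hwsm).2).continuous
  have hcu : Continuous u := hud.continuous
  have hce : Continuous (fun x => Real.exp (u x)) := Real.continuous_exp.comp hcu
  -- periodicity of w
  have hwper : Function.Periodic w 1 := by
    intro x
    have he : (fun y : ℝ => u (y + 1)) = u := funext fun y => hper y
    calc deriv u (x + 1) = deriv (fun y : ℝ => u (y + 1)) x := (deriv_comp_add_const u 1 x).symm
    _ = deriv u x := by rw [he]
  -- ODE rearranged
  have hode' : ∀ x, deriv w x = 2 * (lam - Real.exp (u x)) := by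
    intro x
    have := hode x
    rw [hw]
    linarith
  -- E1 : mean of w is zero
  have hE1 : (∫ x in (0:ℝ)..1, w x) = 0 := by
    rw [hw, intervalIntegral.integral_deriv_eq_sub (fun x _ => hud.differentiableAt)
      (hcw.intervalIntegrable 0 1)]
    have : u 1 = u 0 := by simpa using hper 0
    rw [this, sub_self]
  -- E2 : mean of w' is zero
  have hE2 : (∫ x in (0:ℝ)..1, deriv w x) = 0 := by
    rw [intervalIntegral.integral_deriv_eq_sub (fun x _ => hwd.differentiableAt)
      (hcw'.intervalIntegrable 0 1)]
    have : w 1 = w 0 := by simpa using hwper 0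
    rw [this, sub_self]
  -- E3 : ∫ w' w² = 0
  have hE3 : (∫ x in (0:ℝ)..1, deriv w x * w x ^ 2) = 0 := by
    have hD : ∀ x ∈ Set.uIcc (0:ℝ) 1, HasDerivAt (fun y => w y ^ 3 / 3)
        (deriv w x * w x ^ 2) x := by
      intro x _
      have h := ((hwd x).hasDerivAt.pow 3).div_const 3
      refine h.congr_deriv ?_
      push_cast
      ring
    rw [intervalIntegral.integral_eq_sub_of_hasDerivAt hD
      (((hcw'.mul (hcw.pow 2))).intervalIntegrable 0 1)]
    have : w 1 = w 0 := by simpa using hwper 0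
    rw [this, sub_self]
  -- E4 : ∫ (e^u w² + e^u w') = 0
  have hE4 : (∫ x in (0:ℝ)..1, (Real.exp (u x) * w x ^ 2 + Real.exp (u x) * deriv w x)) = 0 := by
    have hD : ∀ x ∈ Set.uIcc (0:ℝ) 1, HasDerivAt (fun y => Real.exp (u y) * w y)
        (Real.exp (u x) * w x ^ 2 + Real.exp (u x) * deriv w x) x := by
      intro x _
      have h := ((hud x).hasDerivAt.exp.mul (hwd x).hasDerivAt)
      refine h.congr_deriv ?_
      rw [← hw]
      ring
    rw [intervalIntegral.integral_eq_sub_of_hasDerivAt hD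
      (((hce.mul (hcw.pow 2)).add (hce.mul hcw')).intervalIntegrable 0 1)]
    have h1 : w 1 = w 0 := by simpa using hwper 0
    have h2 : u 1 = u 0 := by simpa using hper 0
    rw [h1, h2, sub_self]
  -- split E4
  have hE4' : (∫ x in (0:ℝ)..1, Real.exp (u x) * deriv w x)
      = - ∫ x in (0:ℝ)..1, Real.exp (u x) * w x ^ 2 := by
    have := intervalIntegral.integral_add (μ := volume) (f := fun x => Real.exp (u x) * w x ^ 2)
      (g := fun x => Real.exp (u x) * deriv w x) ((hce.mul (hcw.pow 2)).intervalIntegrable 0 1)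
      ((hce.mul hcw').intervalIntegrable 0 1)
    rw [this] at hE4
    linarith
  set A := ∫ x in (0:ℝ)..1, w x ^ 2 with hA
  -- C = lam * A
  have hC : (∫ x in (0:ℝ)..1, Real.exp (u x) * w x ^ 2) = lam * A := by
    have hpt : ∀ x ∈ Set.uIcc (0:ℝ) 1, Real.exp (u x) * w x ^ 2
        = lam * w x ^ 2 - (1/2) * (deriv w x * w x ^ 2) := by
      intro x _
      rw [hode' x]
      ring
    rw [intervalIntegral.integral_congr hpt,
      intervalIntegral.integral_sub (f := fun x => lam * w x ^ 2)
        (g := fun x => (1/2) * (deriv w x * w x ^ 2)) (((continuous_const.mul (hcw.pow 2))).intervalIntegrable 0 1)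
        ((continuous_const.mul (hcw'.mul (hcw.pow 2))).intervalIntegrable 0 1),
      intervalIntegral.integral_const_mul, intervalIntegral.integral_const_mul, hE3]
    ring
  -- B = 2 lam A
  have hB : (∫ x in (0:ℝ)..1, deriv w x ^ 2) = 2 * lam * A := by
    have hpt : ∀ x ∈ Set.uIcc (0:ℝ) 1, deriv w x ^ 2
        = 2 * lam * deriv w x - 2 * (Real.exp (u x) * deriv w x) := by
      intro x _
      rw [hode' x]
      ring
    rw [intervalIntegral.integral_congr hpt,
      intervalIntegral.integral_sub (f := fun x => 2 * lam * deriv w x)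
        (g := fun x => 2 * (Real.exp (u x) * deriv w x)) ((continuous_const.mul hcw').intervalIntegrable 0 1)
        ((continuous_const.mul (hce.mul hcw')).intervalIntegrable 0 1),
      intervalIntegral.integral_const_mul, intervalIntegral.integral_const_mul,
      hE2, hE4', hC]
    ring
  -- Wirtinger
  have hwir := wirtinger_period_one hwd hcw' hwper hE1
  rw [hB, ← hA] at hwir
  have hA0 : A = 0 := by
    have hAnn : 0 ≤ A := intervalIntegral.integral_nonneg (by norm_num)
      (fun x _ => sq_nonneg _)
    nlinarith
  -- w vanishes identically
  have hw0 : ∀ x, w x = 0 := by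
    by_contra hcon
    push_neg at hcon
    obtain ⟨x₀, hx₀⟩ := hcon
    set t := Int.fract x₀ with ht
    have htmem : 0 ≤ t ∧ t < 1 := ⟨Int.fract_nonneg x₀, Int.fract_lt_one x₀⟩
    have hwt : w t ≠ 0 := by
      have := hwper.sub_zsmul_eq (x := x₀) ⌊x₀⌋
      rw [show x₀ - ⌊x₀⌋ • (1:ℝ) = t by rw [ht, Int.fract]; simp] at this
      rw [this]
      exact hx₀
    have hcont : ContinuousAt w t := hcw.continuousAt
    have hev : ∀ᶠ y in nhds t, w y ≠ 0 := hcont.eventually_ne hwt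
    obtain ⟨ε, hε, hball⟩ := Metric.eventually_nhds_iff.mp hev
    have hpos : 0 < A := by
      rw [hA]
      rw [intervalIntegral.integral_pos_iff_support_of_nonneg_ae
        (Filter.Eventually.of_forall (fun x => sq_nonneg _))
        ((hcw.pow 2).intervalIntegrable 0 1)]
      refine ⟨one_pos, ?_⟩
      have hsub : Set.Ioo t (min (t + ε) 1) ⊆
          (Function.support fun x => w x ^ 2) ∩ Set.Ioc 0 1 := by
        intro y hy
        obtain ⟨hy1, hy2⟩ := hy
        constructor
        · have : w y ≠ 0 := hball (by
            rw [Real.dist_eq, abs_of_pos (by linarith)]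
            have := lt_min_iff.mp hy2
            linarith [this.1])
          simp [Function.support, pow_eq_zero_iff, this]
        · exact ⟨lt_of_le_of_lt htmem.1 hy1, le_of_lt (lt_min_iff.mp hy2).2⟩
      calc (0:ENNReal) < volume (Set.Ioo t (min (t + ε) 1)) := by
            rw [Real.volume_Ioo]
            have : t < min (t + ε) 1 := lt_min (by linarith) htmem.2
            simp only [ENNReal.ofReal_pos]
            linarith
        _ ≤ _ := measure_mono hsub
    rw [hA0] at hpos
    exact lt_irrefl 0 hpos
  exact is_const_of_deriv_eq_zero hud hw0
end
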